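/- Let A ∈ ℝ^{N×N} be symmetric with A·1_N = 0, let F be the N×N DFT matrix, Γ the multiplier diagonal matrix, and let = F A Fᵀ. Fix index sets I ⊆ {1,…,N} and J = {1,…,N}∖I. Then the off-block operator norm satisfies ‖Â_{I,J}‖_op ≤ max_{t∈I, t'∈J} |γ_t γ_{t'}|^m · ‖F (Δ^{(m,m)}A) Fᵀ‖_op for every positive integer m. -/

import Mathlib

open Complex Matrix

/-- The mixed second finite difference with periodic indexing, scaled by `N²`. -/
def mixedDiff (N : ℕ) [NeZero N] (A : Matrix (Fin N) (Fin N) ℝ) : Matrix (Fin N) (Fin N) ℝ :=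
  Matrix.of fun t t' =>
    (N : ℝ) ^ 2 * (A t t' - A (t - 1) t' - A t (t' - 1) + A (t - 1) (t' - 1))

/-!
With `ζ = exp(-2πi/N)` the matrix `F` is `(ζ ^ (t s))`, and for the cyclic shift `S`,
`(S M) t s = M (t - 1) s`, one has `F S = diag(ζ^t) F`. Since `Δ C = N² (1 - S) C (1 - S)ᵀ`,
conjugation by `F` turns `Δ^[m]` into multiplication on both sides by `diag(N (1 - ζ^t))^m`,
whose entries are `γ_t^{-m}` for `t ≠ 0`. The zero row sums of the symmetric matrix `A` make
row and column `0` (index 1 in the paper) of `Â` vanish, so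
`Â_{I,J} = diag(1_I γ^m) (F (Δ^[m] A) Fᵀ) diag(1_J γ^m)`, and the bound follows from
submultiplicativity of the operator norm and `‖diag v‖ = max |v_i|`.
-/

lemma pow_val_add_one_of_pow_eq_one {M : Type*} [Monoid M] {N : ℕ} [NeZero N] {w : M}
    (hw : w ^ N = 1) (s : Fin N) : w ^ ((s + 1 : Fin N) : ℕ) = w ^ (s : ℕ) * w := by
  rw [Fin.val_add, Fin.val_one', Nat.add_mod_mod, ← pow_eq_pow_mod _ hw, pow_succ]

def dftMatrix {R : Type*} [Monoid R] (N : ℕ) (ζ : R) : Matrix (Fin N) (Fin N) R :=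
  of fun t s => ζ ^ ((t : ℕ) * (s : ℕ))

def cyclicShift (N : ℕ) [NeZero N] (R : Type*) [Zero R] [One R] : Matrix (Fin N) (Fin N) R :=
  (Equiv.subRight (1 : Fin N)).toPEquiv.toMatrix

section Shift

variable {R : Type*} [NonAssocSemiring R] {N : ℕ} [NeZero N]

lemma cyclicShift_mul {ι : Type*} (M : Matrix (Fin N) ι R) :
    cyclicShift N R * M = M.submatrix (· - 1) id :=
  PEquiv.toMatrix_toPEquiv_mul _ M

lemma mul_cyclicShift_transpose {ι : Type*} (M : Matrix ι (Fin N) R) :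
    M * (cyclicShift N R)ᵀ = M.submatrix id (· - 1) := by
  rw [cyclicShift, ← PEquiv.toMatrix_symm, ← Equiv.toPEquiv_symm, PEquiv.mul_toMatrix_toPEquiv]
  rfl

end Shift

section DFT

variable {R : Type*} [CommSemiring R] {N : ℕ} [NeZero N] {ζ : R}

lemma dftMatrix_apply_add_one (hζ : ζ ^ N = 1) (t s : Fin N) :
    dftMatrix N ζ t (s + 1) = ζ ^ (t : ℕ) * dftMatrix N ζ t s := by
  have ht : (ζ ^ (t : ℕ)) ^ N = 1 := by rw [← pow_mul, mul_comm, pow_mul, hζ, one_pow]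
  simp only [dftMatrix, of_apply, pow_mul, pow_val_add_one_of_pow_eq_one ht, mul_comm]

lemma dftMatrix_mul_cyclicShift (hζ : ζ ^ N = 1) :
    dftMatrix N ζ * cyclicShift N R = diagonal (fun t : Fin N => ζ ^ (t : ℕ)) * dftMatrix N ζ := by
  ext t s
  simp [cyclicShift, PEquiv.mul_toMatrix_toPEquiv, dftMatrix_apply_add_one hζ]

variable (ζ) (M : Matrix (Fin N) (Fin N) R)

lemma dftMatrix_conj_apply_zero_left (hM : (fun _ => 1) ᵥ* M = 0) (j : Fin N) :
    (dftMatrix N ζ * M * (dftMatrix N ζ)ᵀ) 0 j = 0 := by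
  have h : ∀ s, (dftMatrix N ζ * M) 0 s = 0 := fun s => by
    simpa [mul_apply, dftMatrix, vecMul, dotProduct] using congrFun hM s
  rw [Matrix.mul_apply]
  simp [h]

lemma dftMatrix_conj_apply_zero_right (hM : M *ᵥ (fun _ => 1) = 0) (i : Fin N) :
    (dftMatrix N ζ * M * (dftMatrix N ζ)ᵀ) i 0 = 0 := by
  have h : ∀ s, (M * (dftMatrix N ζ)ᵀ) s 0 = 0 := fun s => by
    simpa [mul_apply, dftMatrix, mulVec, dotProduct] using congrFun hM s
  rw [Matrix.mul_assoc, Matrix.mul_apply]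
  simp [h]

end DFT

lemma dftMatrix_mul_one_sub_cyclicShift {R : Type*} [CommRing R] {N : ℕ} [NeZero N] {ζ : R}
    (hζ : ζ ^ N = 1) :
    dftMatrix N ζ * (1 - cyclicShift N R) =
      diagonal (fun t : Fin N => 1 - ζ ^ (t : ℕ)) * dftMatrix N ζ := by
  rw [mul_sub, dftMatrix_mul_cyclicShift hζ, ← diagonal_one, ← diagonal_sub, diagonal_one,
    sub_mul, one_mul, mul_one]

lemma mixedDiff_map_ofReal (N : ℕ) [NeZero N] (C : Matrix (Fin N) (Fin N) ℝ) :
    (mixedDiff N C).map ofReal =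
      (N : ℂ) ^ 2 • ((1 - cyclicShift N ℂ) * C.map ofReal * (1 - cyclicShift N ℂ)ᵀ) := by
  ext i j
  simp only [mixedDiff, map_apply, of_apply, ofReal_mul, ofReal_pow, ofReal_natCast, ofReal_add,
    ofReal_sub, sub_mul, one_mul, cyclicShift_mul, transpose_sub, transpose_one, mul_sub, mul_one,
    mul_cyclicShift_transpose, submatrix_submatrix, CompTriple.comp_eq, Matrix.smul_apply,
    Matrix.sub_apply, submatrix_apply, id_eq, smul_eq_mul]
  ring

lemma dftMatrix_conj_mixedDiff {N : ℕ} [NeZero N] {ζ : ℂ} (hζ : ζ ^ N = 1)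
    (C : Matrix (Fin N) (Fin N) ℝ) :
    dftMatrix N ζ * (mixedDiff N C).map ofReal * (dftMatrix N ζ)ᵀ =
      diagonal (fun t : Fin N => (N : ℂ) * (1 - ζ ^ (t : ℕ))) *
        (dftMatrix N ζ * C.map ofReal * (dftMatrix N ζ)ᵀ) *
        diagonal (fun t : Fin N => (N : ℂ) * (1 - ζ ^ (t : ℕ))) := by
  set F := dftMatrix N ζ
  set S := 1 - cyclicShift N ℂ
  set Ω := diagonal fun t : Fin N => 1 - ζ ^ (t : ℕ)
  have hFS : F * S = Ω * F := dftMatrix_mul_one_sub_cyclicShift hζ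
  have hSF : Sᵀ * Fᵀ = Fᵀ * Ω := by rw [← transpose_mul, hFS, transpose_mul, diagonal_transpose]
  have hD : diagonal (fun t : Fin N => (N : ℂ) * (1 - ζ ^ (t : ℕ))) = (N : ℂ) • Ω := by
    rw [← diagonal_smul]; rfl
  rw [mixedDiff_map_ofReal, hD]
  simp only [Matrix.mul_smul, Matrix.smul_mul, smul_smul, ← sq]
  congr 1
  calc F * (S * C.map ofReal * Sᵀ) * Fᵀ = F * S * C.map ofReal * (Sᵀ * Fᵀ) := by
        simp only [Matrix.mul_assoc]
    _ = Ω * (F * C.map ofReal * Fᵀ) * Ω := by rw [hFS, hSF]; simp only [Matrix.mul_assoc]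

lemma apply_iterate_eq_pow_mul_mul_pow {α M : Type*} [Monoid M] (f : α → M) (g : α → α) (D : M)
    (h : ∀ x, f (g x) = D * f x * D) (k : ℕ) (x : α) :
    f (g^[k] x) = D ^ k * f x * D ^ k := by
  induction k with
  | zero => simp
  | succ k ih =>
    rw [Function.iterate_succ_apply', h, ih]
    simp only [mul_assoc, ← pow_succ]
    rw [← mul_assoc, ← pow_succ']

lemma dftMatrix_conj_iterate_mixedDiff {N : ℕ} [NeZero N] {ζ : ℂ} (hζ : ζ ^ N = 1)
    (C : Matrix (Fin N) (Fin N) ℝ) (m : ℕ) :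
    dftMatrix N ζ * ((mixedDiff N)^[m] C).map ofReal * (dftMatrix N ζ)ᵀ =
      diagonal (fun t : Fin N => ((N : ℂ) * (1 - ζ ^ (t : ℕ))) ^ m) *
        (dftMatrix N ζ * C.map ofReal * (dftMatrix N ζ)ᵀ) *
        diagonal (fun t : Fin N => ((N : ℂ) * (1 - ζ ^ (t : ℕ))) ^ m) := by
  have h := apply_iterate_eq_pow_mul_mul_pow
    (fun C => dftMatrix N ζ * C.map ofReal * (dftMatrix N ζ)ᵀ) _ _ (dftMatrix_conj_mixedDiff hζ) m C
  rwa [diagonal_pow] at h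

lemma exp_neg_two_pi_I_mul_div (N k : ℕ) :
    exp (-2 * Real.pi * I * k / N) = exp (-2 * Real.pi * I / N) ^ k := by
  rw [← exp_nat_mul]; ring_nf

lemma isPrimitiveRoot_exp_neg (N : ℕ) (hN : N ≠ 0) :
    IsPrimitiveRoot (exp (-2 * Real.pi * I / N)) N := by
  have h := (isPrimitiveRoot_exp N hN).inv
  rwa [← exp_neg, ← neg_div, ← neg_mul, ← neg_mul] at h

lemma dftMatrix_exp_apply (N : ℕ) (t s : Fin N) :
    dftMatrix N (exp (-2 * Real.pi * I / N)) t s =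
      exp (-2 * Real.pi * I * (t : ℕ) * (s : ℕ) / N) := by
  rw [dftMatrix, of_apply, ← exp_neg_two_pi_I_mul_div]
  push_cast
  ring_nf

lemma map_mulVec_eq_zero {m n R S : Type*} [Fintype n] [NonAssocSemiring R] [NonAssocSemiring S]
    (f : R →+* S) {M : Matrix m n R} {v : n → R} (h : M *ᵥ v = 0) : M.map f *ᵥ (f ∘ v) = 0 := by
  ext i
  rw [← RingHom.map_mulVec, h, Pi.zero_apply, map_zero, Pi.zero_apply]

lemma offBlock_eq_diagonal_mul_mul_diagonal {n R : Type*} [Fintype n] [DecidableEq n]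
    [CommSemiring R] (X : Matrix n n R) (d g : n → R) (i₀ : n) (hrow : ∀ j, X i₀ j = 0)
    (hcol : ∀ i, X i i₀ = 0) (hgd : ∀ t ≠ i₀, g t * d t = 1) (I J : Finset n) :
    of (fun i j => if i ∈ I ∧ j ∈ J then X i j else 0) =
      diagonal (fun i => if i ∈ I then g i else 0) * (diagonal d * X * diagonal d) *
        diagonal (fun j => if j ∈ J then g j else 0) := by
  ext i j
  simp only [of_apply, diagonal_mul, mul_diagonal, ite_mul, zero_mul, mul_ite, mul_zero]
  by_cases hi : i = i₀
  · simp [hi, hrow]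
  by_cases hj : j = i₀
  · simp [hj, hcol]
  have hX : g i * (d i * X i j * d j) * g j = X i j := by
    calc g i * (d i * X i j * d j) * g j = (g i * d i) * (g j * d j) * X i j := by ring
      _ = X i j := by rw [hgd i hi, hgd j hj, one_mul, one_mul]
  split_ifs <;> simp_all

open scoped Matrix.Norms.L2Operator in
lemma norm_toEuclideanCLM_diagonal_mul_mul_diagonal_le {𝕜 n : Type*} [RCLike 𝕜] [Fintype n]
    [DecidableEq n] (B : Matrix n n 𝕜) {d e : n → 𝕜} {a b : ℝ} (ha : 0 ≤ a) (hb : 0 ≤ b)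
    (hd : ∀ i, ‖d i‖ ≤ a) (he : ∀ j, ‖e j‖ ≤ b) :
    ‖toEuclideanCLM (𝕜 := 𝕜) (diagonal d * B * diagonal e)‖ ≤
      a * b * ‖toEuclideanCLM (𝕜 := 𝕜) B‖ := by
  simp only [l2_opNorm_toEuclideanCLM]
  calc ‖diagonal d * B * diagonal e‖ ≤ ‖diagonal d‖ * ‖B‖ * ‖diagonal e‖ :=
        (l2_opNorm_mul _ _).trans (mul_le_mul_of_nonneg_right (l2_opNorm_mul _ _) (norm_nonneg _))
    _ ≤ a * ‖B‖ * b := by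
        rw [l2_opNorm_diagonal, l2_opNorm_diagonal]
        gcongr
        · exact (pi_norm_le_iff_of_nonneg ha).2 hd
        · exact (pi_norm_le_iff_of_nonneg hb).2 he
    _ = a * b * ‖B‖ := by ring

lemma norm_ite_mem_le_sup' {ι E : Type*} [DecidableEq ι] [SeminormedAddGroup E] {s : Finset ι}
    (hs : s.Nonempty) (f : ι → E) (i : ι) :
    ‖if i ∈ s then f i else 0‖ ≤ s.sup' hs (‖f ·‖) := by
  split_ifs with hi
  · exact Finset.le_sup' (‖f ·‖) hi
  · obtain ⟨k, hk⟩ := hs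
    exact norm_zero (E := E) ▸ (norm_nonneg (f k)).trans (Finset.le_sup' (‖f ·‖) hk)

lemma Finset.sup'_mul_sup'_le_sup'_product {α β γ : Type*} [LinearOrder α] [Mul α]
    {s : Finset β} {t : Finset γ} (hs : s.Nonempty) (ht : t.Nonempty) (f : β → α) (g : γ → α) :
    s.sup' hs f * t.sup' ht g ≤ (s ×ˢ t).sup' (hs.product ht) fun p => f p.1 * g p.2 := by
  obtain ⟨i, hi, hfi⟩ := s.exists_mem_eq_sup' hs f
  obtain ⟨j, hj, hgj⟩ := t.exists_mem_eq_sup' ht g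
  rw [hfi, hgj]
  exact Finset.le_sup' (fun p : β × γ => f p.1 * g p.2) (Finset.mk_mem_product hi hj)

theorem offBlock_opNorm_le_general (N : ℕ) [NeZero N]
    (A : Matrix (Fin N) (Fin N) ℝ) (hsymm : A.IsSymm)
    (hsum : A.mulVec (fun _ => 1) = 0)
    (F : Matrix (Fin N) (Fin N) ℂ)
    (hF : ∀ t t', F t t' =
      Complex.exp (-2 * Real.pi * Complex.I * ((t : ℕ) : ℂ) * ((t' : ℕ) : ℂ) / N))
    (γ : Fin N → ℂ)
    (hγ : ∀ t : Fin N, t ≠ 0 →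
      γ t = (N : ℂ)⁻¹ * (1 - Complex.exp (-2 * Real.pi * Complex.I * ((t : ℕ) : ℂ) / N))⁻¹)
    (I : Finset (Fin N)) (hI : I.Nonempty) (hJ : Iᶜ.Nonempty)
    (Ahat : Matrix (Fin N) (Fin N) ℂ)
    (hAhat : Ahat = F * A.map (fun a => (a : ℂ)) * F.transpose)
    (AhatIJ : Matrix (Fin N) (Fin N) ℂ)
    (hAhatIJ : ∀ i j, AhatIJ i j = if i ∈ I ∧ j ∈ Iᶜ then Ahat i j else 0)
    (m : ℕ) :
    ‖Matrix.toEuclideanCLM (𝕜 := ℂ) AhatIJ‖ ≤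
      ((I ×ˢ Iᶜ).sup' (hI.product hJ)
          fun p => ‖γ p.1 * γ p.2‖ ^ m) *
        ‖Matrix.toEuclideanCLM (𝕜 := ℂ)
          (F * ((mixedDiff N)^[m] A).map (fun a => (a : ℂ)) * F.transpose)‖ := by
  set ζ := exp (-2 * Real.pi * Complex.I / N)
  have hζ : IsPrimitiveRoot ζ N := isPrimitiveRoot_exp_neg N (NeZero.ne N)
  obtain rfl : F = dftMatrix N ζ := ext fun t s => (hF t s).trans (dftMatrix_exp_apply N t s).symm
  have hmulVec : A.map ofReal *ᵥ (fun _ => 1) = 0 := map_mulVec_eq_zero ofRealHom hsum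
  have hvecMul : (fun _ => 1) ᵥ* A.map ofReal = 0 := by
    rw [← mulVec_transpose, ← transpose_map, hsymm.eq, hmulVec]
  have hγd : ∀ t ≠ 0, γ t ^ m * ((N : ℂ) * (1 - ζ ^ (t : ℕ))) ^ m = 1 := fun t ht => by
    have hne : 1 - ζ ^ (t : ℕ) ≠ 0 :=
      sub_ne_zero.2 (hζ.pow_ne_one_of_pos_of_lt (Fin.val_ne_zero_iff.2 ht) t.isLt).symm
    rw [← mul_pow, hγ t ht, exp_neg_two_pi_I_mul_div, mul_mul_mul_comm,
      inv_mul_cancel₀ (NeZero.ne _), inv_mul_cancel₀ hne, one_mul, one_pow]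
  have hIJ : AhatIJ = of fun i j => if i ∈ I ∧ j ∈ Iᶜ then Ahat i j else 0 := ext hAhatIJ
  rw [hIJ, offBlock_eq_diagonal_mul_mul_diagonal Ahat _ (γ ^ m) 0
    (hAhat ▸ dftMatrix_conj_apply_zero_left ζ _ hvecMul)
    (hAhat ▸ dftMatrix_conj_apply_zero_right ζ _ hmulVec) hγd, hAhat,
    ← dftMatrix_conj_iterate_mixedDiff hζ.pow_eq_one]
  refine (norm_toEuclideanCLM_diagonal_mul_mul_diagonal_le _
    ((norm_nonneg _).trans (norm_ite_mem_le_sup' hI (γ ^ m) 0))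
    ((norm_nonneg _).trans (norm_ite_mem_le_sup' hJ (γ ^ m) 0))
    (norm_ite_mem_le_sup' hI _) (norm_ite_mem_le_sup' hJ _)).trans ?_
  gcongr
  refine (Finset.sup'_mul_sup'_le_sup'_product hI hJ _ _).trans_eq ?_
  simp [mul_pow]

theorem offBlock_opNorm_le (N : ℕ) [NeZero N]
    (A : Matrix (Fin N) (Fin N) ℝ) (hsymm : A.IsSymm)
    (hsum : A.mulVec (fun _ => 1) = 0)
    (F : Matrix (Fin N) (Fin N) ℂ)
    (hF : ∀ t t', F t t' =
      Complex.exp (-2 * Real.pi * Complex.I * ((t : ℕ) : ℂ) * ((t' : ℕ) : ℂ) / N))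
    (γ : Fin N → ℂ) (hγ0 : γ 0 = 1)
    (hγ : ∀ t : Fin N, t ≠ 0 →
      γ t = (N : ℂ)⁻¹ * (1 - Complex.exp (-2 * Real.pi * Complex.I * ((t : ℕ) : ℂ) / N))⁻¹)
    (I : Finset (Fin N)) (hI : I.Nonempty) (hJ : Iᶜ.Nonempty)
    (Ahat : Matrix (Fin N) (Fin N) ℂ)
    (hAhat : Ahat = F * A.map (fun a => (a : ℂ)) * F.transpose)
    (AhatIJ : Matrix (Fin N) (Fin N) ℂ)
    (hAhatIJ : ∀ i j, AhatIJ i j = if i ∈ I ∧ j ∈ Iᶜ then Ahat i j else 0)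
    (m : ℕ) (hm : 0 < m) :
    ‖Matrix.toEuclideanCLM (𝕜 := ℂ) AhatIJ‖ ≤
      ((I ×ˢ Iᶜ).sup' (hI.product hJ)
          fun p => ‖γ p.1 * γ p.2‖ ^ m) *
        ‖Matrix.toEuclideanCLM (𝕜 := ℂ)
          (F * ((mixedDiff N)^[m] A).map (fun a => (a : ℂ)) * F.transpose)‖ :=
  offBlock_opNorm_le_general N A hsymm hsum F hF γ hγ I hI hJ Ahat hAhat AhatIJ hAhatIJ m
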